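/- For d ≥ 1, the value of the (d-1)-st iterated backward difference of χ̃ at x = d satisfies (D^{d-1}χ̃)(d)/(d-1)! = (d·μ^{d-1}/2)·(μ(d+1) - p). -/
import Mathlib


/-- Backward difference operator: `(D f)(x) = f x - f (x-1)`. -/
noncomputable def bdiff (f : ℝ → ℝ) : ℝ → ℝ := fun x => f x - f (x - 1)

/-- `d = r(r-1)a/2 + rb + r`. -/
def dInv (r a b : ℕ) : ℕ := r * (r - 1) * a / 2 + r * b + r

/-- `p = (r-1)a + b + 2`. -/
def pInv (r a b : ℕ) : ℕ := (r - 1) * a + b + 2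

/-- The function `χ̃(x) = ∏_{j=1}^r (μx - p + 1 + (j-1)a/2)_{1+b+(r-j)a}`. -/
noncomputable def chiF (r a b : ℕ) (μ : ℝ) : ℝ → ℝ := fun x =>
  ∏ j ∈ Finset.Icc 1 r,
    (ascPochhammer ℝ (1 + b + (r - j) * a)).eval
      (μ * x - (pInv r a b : ℝ) + 1 + ((j : ℝ) - 1) * a / 2)

open Polynomial Finset


noncomputable def dOp (P : Polynomial ℝ) : Polynomial ℝ := P - P.comp (X - 1)

lemma dOp_add (P Q : Polynomial ℝ) : dOp (P + Q) = dOp P + dOp Q := by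
  simp only [dOp, add_comp]; ring

lemma dOp_smul (c : ℝ) (P : Polynomial ℝ) : dOp (c • P) = c • dOp P := by
  simp only [dOp, smul_comp, smul_sub]

lemma dOp_C (c : ℝ) : dOp (C c) = 0 := by simp [dOp]

lemma dOp_iter_add (k : ℕ) (P Q : Polynomial ℝ) :
    dOp^[k] (P + Q) = dOp^[k] P + dOp^[k] Q := by
  induction k generalizing P Q with
  | zero => rfl
  | succ k ih => simp [Function.iterate_succ_apply, dOp_add, ih]

lemma dOp_iter_smul (k : ℕ) (c : ℝ) (P : Polynomial ℝ) :
    dOp^[k] (c • P) = c • dOp^[k] P := by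
  induction k generalizing P with
  | zero => rfl
  | succ k ih => simp [Function.iterate_succ_apply, dOp_smul, ih]

lemma dOp_asc (n : ℕ) : dOp (ascPochhammer ℝ (n+1)) = ((n:ℝ)+1) • ascPochhammer ℝ n := by
  have h1 : (ascPochhammer ℝ (n+1)).comp (X - 1) = (X - 1) * ascPochhammer ℝ n := by
    rw [ascPochhammer_succ_left, mul_comp, X_comp, comp_assoc]
    have h2 : (X + 1 : Polynomial ℝ).comp (X - 1) = X := by
      simp [add_comp]
    rw [h2, comp_X]
  rw [dOp, h1, ascPochhammer_succ_right, smul_eq_C_mul, ← C_eq_natCast, map_add, C_1]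
  ring

lemma dOp_iter_asc_fact (n : ℕ) : dOp^[n] (ascPochhammer ℝ n) = C ((Nat.factorial n : ℕ) : ℝ) := by
  induction n with
  | zero => simp
  | succ n ih =>
    rw [Function.iterate_succ_apply, dOp_asc, dOp_iter_smul, ih, smul_eq_C_mul, ← C_mul]
    congr 1
    push_cast [Nat.factorial_succ]
    ring

lemma dOp_iter_asc_succ (n : ℕ) :
    dOp^[n] (ascPochhammer ℝ (n+1)) = ((Nat.factorial (n+1) : ℕ) : ℝ) • X := by
  induction n with
  | zero => simp
  | succ n ih =>
    rw [Function.iterate_succ_apply, dOp_asc, dOp_iter_smul, ih, smul_smul]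
    congr 1
    push_cast [Nat.factorial_succ]
    ring

lemma sub_top_natDegree (n : ℕ) (P : Polynomial ℝ) (h : P.natDegree ≤ n + 1) :
    (P - P.coeff (n+1) • ascPochhammer ℝ (n+1)).natDegree ≤ n := by
  rw [natDegree_le_iff_coeff_eq_zero]
  intro N hN
  have hasc : (ascPochhammer ℝ (n+1)).natDegree = n + 1 := ascPochhammer_natDegree (S := ℝ) _
  rw [coeff_sub, coeff_smul, smul_eq_mul]
  rcases eq_or_lt_of_le (Nat.succ_le_of_lt hN) with hN' | hN'
  · rw [← hN']
    have h1 : (ascPochhammer ℝ (n+1)).coeff (n+1) = 1 := by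
      have hm := monic_ascPochhammer (S := ℝ) (n+1)
      rwa [Monic, leadingCoeff, hasc] at hm
    rw [h1, mul_one, sub_self]
  · have h1 : P.coeff N = 0 := coeff_eq_zero_of_natDegree_lt (lt_of_le_of_lt h hN')
    have h2 : (ascPochhammer ℝ (n+1)).coeff N = 0 :=
      coeff_eq_zero_of_natDegree_lt (by rw [hasc]; exact hN')
    rw [h1, h2, mul_zero, sub_zero]

lemma dOp_iter_const (n : ℕ) (P : Polynomial ℝ) (h : P.natDegree ≤ n) :
    dOp^[n] P = C (((Nat.factorial n : ℕ) : ℝ) * P.coeff n) := by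
  induction n generalizing P with
  | zero =>
    simp only [Function.iterate_zero, id_eq, Nat.factorial_zero, Nat.cast_one, one_mul]
    exact eq_C_of_natDegree_le_zero h
  | succ n ih =>
    have hQ := sub_top_natDegree n P h
    have hsplit : dOp^[n+1] P
        = dOp^[n+1] (P - P.coeff (n+1) • ascPochhammer ℝ (n+1))
          + P.coeff (n+1) • dOp^[n+1] (ascPochhammer ℝ (n+1)) := by
      rw [← dOp_iter_smul, ← dOp_iter_add]
      congr 1
      ring
    rw [hsplit, Function.iterate_succ_apply', ih _ hQ, dOp_C, dOp_iter_asc_fact, zero_add,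
      smul_eq_C_mul, ← C_mul, mul_comm]

lemma dOp_key (e : ℕ) (P : Polynomial ℝ) (h : P.natDegree ≤ e + 1) (x : ℝ) :
    (dOp^[e] P).eval x = P.coeff (e+1) * ((Nat.factorial (e+1) : ℕ) : ℝ) * x
      + ((Nat.factorial e : ℕ) : ℝ) * (P.coeff e - P.coeff (e+1) * (ascPochhammer ℝ (e+1)).coeff e) := by
  have hQ := sub_top_natDegree e P h
  have hsplit : dOp^[e] P
      = dOp^[e] (P - P.coeff (e+1) • ascPochhammer ℝ (e+1))
        + P.coeff (e+1) • dOp^[e] (ascPochhammer ℝ (e+1)) := by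
    rw [← dOp_iter_smul, ← dOp_iter_add]
    congr 1
    ring
  rw [hsplit, dOp_iter_const e _ hQ, dOp_iter_asc_succ, eval_add, eval_C, eval_smul,
    eval_smul, eval_X, coeff_sub, coeff_smul, smul_eq_mul, smul_eq_mul, smul_eq_mul]
  ring


lemma bdiff_iter_eval (P : Polynomial ℝ) (k : ℕ) :
    ∀ x : ℝ, bdiff^[k] (fun y => P.eval y) x = (dOp^[k] P).eval x := by
  induction k with
  | zero => intro x; rfl
  | succ k ih =>
    intro x
    rw [Function.iterate_succ_apply' bdiff, Function.iterate_succ_apply' dOp]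
    show bdiff^[k] _ x - bdiff^[k] _ (x - 1) = _
    rw [ih x, ih (x-1), dOp, eval_sub, eval_comp]
    simp

lemma gauss_real (n : ℕ) : (∑ i ∈ range n, (i:ℝ)) = n * ((n:ℝ) - 1) / 2 := by
  induction n with
  | zero => simp
  | succ n ih => rw [sum_range_succ, ih]; push_cast; ring

lemma asc_nextCoeff (n : ℕ) : (ascPochhammer ℝ n).nextCoeff = ∑ i ∈ range n, (i:ℝ) := by
  induction n with
  | zero => simp [nextCoeff]
  | succ n ih =>
    rw [ascPochhammer_succ_right, ← C_eq_natCast,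
      Monic.nextCoeff_mul (monic_ascPochhammer (S := ℝ) n) (monic_X_add_C _), ih,
      nextCoeff_X_add_C, sum_range_succ]

lemma asc_coeff (e : ℕ) : (ascPochhammer ℝ (e+1)).coeff e = ((e:ℝ)+1) * e / 2 := by
  have h := asc_nextCoeff (e+1)
  rw [nextCoeff_of_natDegree_pos (by rw [ascPochhammer_natDegree (S := ℝ)]; omega),
    ascPochhammer_natDegree (S := ℝ), Nat.add_sub_cancel, gauss_real] at h
  rw [h]; push_cast; ring

lemma asc_eval_prod (m : ℕ) (y : ℝ) :
    (ascPochhammer ℝ m).eval y = ∏ i ∈ range m, (y + i) := by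
  induction m with
  | zero => simp
  | succ m ih => rw [ascPochhammer_succ_eval, ih, prod_range_succ]

lemma sum_m (r a b : ℕ) (hr : 1 ≤ r) :
    ∑ j ∈ Icc 1 r, (1 + b + (r - j) * a) = dInv r a b := by
  obtain ⟨u, hu⟩ : Even (r * (r - 1)) := by
    rcases Nat.eq_zero_or_pos r with h | h
    · simp [h]
    · have := Nat.even_mul_succ_self (r - 1)
      rwa [Nat.sub_add_cancel h, mul_comm] at this
  have hgauss : ∑ j ∈ range r, j = u := by
    have := Finset.sum_range_id_mul_two r
    omega
  have h1 : ∑ j ∈ Icc 1 r, (r - j) = u := by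
    rw [← Finset.Ico_add_one_right_eq_Icc, Finset.sum_Ico_eq_sum_range]
    have h2 : ∀ i, r - (1 + i) = r - 1 - i := fun i => by omega
    simp only [Nat.succ_sub_one, Nat.add_sub_cancel, h2]
    rw [Finset.sum_range_reflect (fun i => i) r, hgauss]
  have h3 : ∑ j ∈ Icc 1 r, (1 + b + (r - j) * a)
      = (∑ j ∈ Icc 1 r, (1 + b)) + (∑ j ∈ Icc 1 r, (r - j)) * a := by
    rw [Finset.sum_add_distrib, Finset.sum_mul]
  rw [h3, h1, Finset.sum_const, Nat.card_Icc, smul_eq_mul, dInv]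
  have h4 : r * (r - 1) * a = 2 * (u * a) := by rw [hu]; ring
  rw [h4, Nat.mul_div_cancel_left _ (by norm_num : 0 < 2),
    show r + 1 - 1 = r from by omega]
  ring

theorem stmt9 (r a b : ℕ) (hr : 1 ≤ r) (μ : ℝ) (hμ : 0 < μ) (hd : 1 ≤ dInv r a b) :
    bdiff^[dInv r a b - 1] (chiF r a b μ) (dInv r a b : ℝ) /
        (Nat.factorial (dInv r a b - 1) : ℝ) =
      (dInv r a b : ℝ) * μ ^ (dInv r a b - 1) / 2 *
        (μ * ((dInv r a b : ℝ) + 1) - (pInv r a b : ℝ)) := by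
  have hμ0 : μ ≠ 0 := hμ.ne'
  set d := dInv r a b with hdd
  set p := pInv r a b with hpp
  obtain ⟨e, he⟩ : ∃ e, d = e + 1 := ⟨d - 1, by omega⟩
  set m : ℕ → ℕ := fun j => 1 + b + (r - j) * a with hm
  set t : ℕ → ℝ := fun j => -(p:ℝ) + 1 + ((j:ℝ)-1)*(a:ℝ)/2 with ht
  set R : Polynomial ℝ := ∏ j ∈ Icc 1 r, ∏ i ∈ range (m j), (X + C ((t j + i)/μ)) with hR
  set P : Polynomial ℝ := C (μ^d) * R with hP
  have hsum_m : ∑ j ∈ Icc 1 r, m j = d := sum_m r a b hr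
  have heval : ∀ x : ℝ, chiF r a b μ x = P.eval x := by
    intro x
    have h1 : chiF r a b μ x
        = ∏ j ∈ Icc 1 r, ∏ i ∈ range (m j), (μ * (x + (t j + i)/μ)) := by
      unfold chiF
      refine Finset.prod_congr rfl fun j _ => ?_
      rw [asc_eval_prod]
      refine Finset.prod_congr rfl fun i _ => ?_
      simp only [ht]
      field_simp
      ring
    have h2 : P.eval x = μ^d * ∏ j ∈ Icc 1 r, ∏ i ∈ range (m j), (x + (t j + i)/μ) := by
      simp [hP, hR, eval_prod]
    rw [h1, h2, ← hsum_m, ← Finset.prod_pow_eq_pow_sum, ← Finset.prod_mul_distrib]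
    refine Finset.prod_congr rfl fun j _ => ?_
    rw [show (μ:ℝ)^(m j) = ∏ _i ∈ range (m j), μ by simp, ← Finset.prod_mul_distrib]
  have hmon_inner : ∀ j ∈ Icc 1 r, (∏ i ∈ range (m j), (X + C ((t j + i)/μ))).Monic :=
    fun j _ => monic_prod_of_monic _ _ fun i _ => monic_X_add_C _
  have hmonR : R.Monic := by
    rw [hR]; exact monic_prod_of_monic _ _ hmon_inner
  have hdegR : R.natDegree = d := by
    rw [hR, natDegree_prod_of_monic _ _ hmon_inner, ← hsum_m]
    refine Finset.sum_congr rfl fun j _ => ?_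
    rw [natDegree_prod_of_monic _ _ (fun i _ => monic_X_add_C _)]
    simp [natDegree_X_add_C]
  have hdegP : P.natDegree ≤ e + 1 := by
    rw [← he, ← hdegR, hP]; exact natDegree_C_mul_le _ _
  have hRe : R.coeff e = ∑ j ∈ Icc 1 r, ∑ i ∈ range (m j), ((t j + i)/μ) := by
    have h2 : R.nextCoeff = ∑ j ∈ Icc 1 r, ∑ i ∈ range (m j), ((t j + i)/μ) := by
      rw [hR, Monic.nextCoeff_prod _ _ hmon_inner]
      refine Finset.sum_congr rfl fun j _ => ?_
      rw [Monic.nextCoeff_prod _ _ (fun i _ => monic_X_add_C _)]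
      simp [nextCoeff_X_add_C]
    rw [← h2, nextCoeff_of_natDegree_pos (by rw [hdegR]; omega), hdegR, he, Nat.add_sub_cancel]
  have hPtop : P.coeff (e+1) = μ^d := by
    rw [hP, coeff_C_mul, ← he, ← hdegR, hmonR.coeff_natDegree, mul_one]
  have hPnext : P.coeff e = μ^d * ∑ j ∈ Icc 1 r, ∑ i ∈ range (m j), ((t j + i)/μ) := by
    rw [hP, coeff_C_mul, hRe]
  have hS : ∑ j ∈ Icc 1 r, ∑ i ∈ range (m j), (t j + (i:ℝ)) = -((d:ℝ) * p) / 2 := by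
    have h1 : ∀ j ∈ Icc 1 r, ∑ i ∈ range (m j), (t j + (i:ℝ)) = (m j : ℝ) * (-(p:ℝ)/2) := by
      intro j hj
      obtain ⟨hj1, hj2⟩ := Finset.mem_Icc.mp hj
      rw [Finset.sum_add_distrib, Finset.sum_const, card_range, nsmul_eq_mul, gauss_real]
      have hmj : (m j : ℝ) = 1 + b + ((r:ℝ) - j) * a := by
        simp only [hm]; push_cast [Nat.cast_sub hj2]; ring
      have hpc : (p:ℝ) = ((r:ℝ) - 1) * a + b + 2 := by
        rw [hpp, pInv]; push_cast [Nat.cast_sub hr]; ring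
      rw [hmj]
      simp only [ht]
      rw [hpc]
      ring
    rw [Finset.sum_congr rfl h1, ← Finset.sum_mul]
    have h2 : ∑ j ∈ Icc 1 r, (m j : ℝ) = (d : ℝ) := by
      rw [← Nat.cast_sum, hsum_m]
    rw [h2]; ring
  have hsum_div : ∑ j ∈ Icc 1 r, ∑ i ∈ range (m j), ((t j + i)/μ)
      = (∑ j ∈ Icc 1 r, ∑ i ∈ range (m j), (t j + (i:ℝ))) / μ := by
    rw [Finset.sum_div]; exact Finset.sum_congr rfl fun j _ => by rw [Finset.sum_div]
  have hfun : chiF r a b μ = fun y => P.eval y := funext heval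
  have he1 : d - 1 = e := by omega
  rw [hfun, he1, bdiff_iter_eval, dOp_key e P hdegP, hPtop, hPnext, asc_coeff,
    hsum_div, hS]
  have hfac : ((Nat.factorial (e+1) : ℕ) : ℝ) = ((e:ℝ)+1) * ((Nat.factorial e : ℕ) : ℝ) := by
    push_cast [Nat.factorial_succ]; ring
  have hfe : ((Nat.factorial e : ℕ) : ℝ) ≠ 0 := Nat.cast_ne_zero.mpr (Nat.factorial_ne_zero e)
  have hdr : (d:ℝ) = (e:ℝ) + 1 := by rw [he]; push_cast; ring
  rw [hfac, hdr, he]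
  field_simp
  ring
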